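/- Let (Σ, T) be a finite convergent length-reducing rewriting system with Σ = Σ^{-1} presenting a group G. Then the undirected Cayley graph Γ(G, Σ) is geodetic. -/

import Mathlib

/-- A graph is geodetic if between any two vertices there is a unique shortest walk
(equivalently, a unique shortest path). -/
def IsGeodetic {V : Type*} (G : SimpleGraph V) : Prop :=
  ∀ u v : V, ∃! p : G.Walk u v, ∀ q : G.Walk u v, p.length ≤ q.length

/-- `c : ZMod n → V` is an embedded circuit of length `n`: the vertices are distinct and
cyclically consecutive vertices are adjacent. -/
def IsEmbCircuit {V : Type*} (G : SimpleGraph V) (n : ℕ) (c : ZMod n → V) : Prop :=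
  2 ≤ n ∧ Function.Injective c ∧ ∀ i : ZMod n, G.Adj (c i) (c (i + 1))

/-- An embedded circuit is isometrically embedded if the graph distance between any two of its
vertices equals the cyclic distance `min {j-i, n+i-j}` along the circuit. -/
def IsIEC {V : Type*} (G : SimpleGraph V) (n : ℕ) (c : ZMod n → V) : Prop :=
  IsEmbCircuit G n c ∧ ∀ i j : ZMod n, G.dist (c i) (c j) = min (j - i).val (i - j).val

/-- One-step rewriting: replace a factor which is a left-hand side of a rule. -/
def RWStep {α : Type*} (T : Set (FreeMonoid α × FreeMonoid α)) (u v : FreeMonoid α) : Prop :=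
  ∃ x y l r, (l, r) ∈ T ∧ u = x * l * y ∧ v = x * r * y

/-- Reflexive-transitive closure of one-step rewriting. -/
def RWReduces {α : Type*} (T : Set (FreeMonoid α × FreeMonoid α)) :
    FreeMonoid α → FreeMonoid α → Prop :=
  Relation.ReflTransGen (RWStep T)

/-- Terminating: no infinite chain of immediate reductions. -/
def RWTerminating {α : Type*} (T : Set (FreeMonoid α × FreeMonoid α)) : Prop :=
  ¬ ∃ f : ℕ → FreeMonoid α, ∀ n : ℕ, RWStep T (f n) (f (n + 1))

/-- Confluent rewriting system. -/
def RWConfluent {α : Type*} (T : Set (FreeMonoid α × FreeMonoid α)) : Prop :=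
  ∀ w x y, RWReduces T w x → RWReduces T w y →
    ∃ z, RWReduces T x z ∧ RWReduces T y z

/-- Length-reducing: every rule strictly decreases length. -/
def RWLengthReducing {α : Type*} (T : Set (FreeMonoid α × FreeMonoid α)) : Prop :=
  ∀ p ∈ T, (Prod.snd p).length < (Prod.fst p).length

/-- A word is irreducible if no rewriting step applies to it. -/
def RWIrreducible {α : Type*} (T : Set (FreeMonoid α × FreeMonoid α)) (u : FreeMonoid α) : Prop :=
  ∀ v, ¬ RWStep T u v

/-- The congruence on `Σ*` generated by the rewriting rules. -/
def RWCon {α : Type*} (T : Set (FreeMonoid α × FreeMonoid α)) : Con (FreeMonoid α) :=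
  conGen (RWStep T)

/-- The monoid presented by the rewriting system `(Σ, T)`. -/
abbrev RWMonoid {α : Type*} (T : Set (FreeMonoid α × FreeMonoid α)) :=
  (RWCon T).Quotient

/-- The class of a word in the presented monoid. -/
def RWclass {α : Type*} (T : Set (FreeMonoid α × FreeMonoid α)) (w : FreeMonoid α) :
    RWMonoid T :=
  Con.mk' (RWCon T) w

/-- The undirected Cayley graph of a group `G` with respect to a set `S`:
distinct `g, h` are adjacent iff `g⁻¹ * h ∈ S ∪ S⁻¹`. -/
def CayleyGraph (G : Type*) [Group G] (S : Set G) : SimpleGraph G where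
  Adj g h := g ≠ h ∧ g⁻¹ * h ∈ S ∪ S⁻¹
  symm := ⟨by
    rintro g h ⟨hne, hm⟩
    refine ⟨hne.symm, ?_⟩
    have h2 : (g⁻¹ * h)⁻¹ ∈ S ∪ S⁻¹ := by
      rcases hm with hm | hm
      · exact Or.inr (by simpa using hm)
      · exact Or.inl (by simpa using hm)
    simpa [mul_inv_rev] using h2⟩
  loopless := ⟨fun g hg => hg.1 rfl⟩

/-!
Words over `Σ` spell walks in the Cayley graph, and a shortest walk is spelled by a shortest word
for its group element. Since `T` is length-reducing, a shortest word admits no rewriting step, and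
by confluence every element of `G` has a unique irreducible representative. So two shortest walks
between the same vertices spell the same word and visit the same vertices, hence coincide.
-/

open SimpleGraph

section Rewriting

variable {α : Type*} {T : Set (FreeMonoid α × FreeMonoid α)}

lemma RWStep.mul_mul {u v : FreeMonoid α} (x y : FreeMonoid α) (h : RWStep T u v) :
    RWStep T (x * u * y) (x * v * y) := by
  obtain ⟨x', y', l, r, hlr, rfl, rfl⟩ := h
  exact ⟨x * x', y' * y, l, r, hlr, by simp only [mul_assoc], by simp only [mul_assoc]⟩

lemma RWReduces.mul_mul {u v : FreeMonoid α} (x y : FreeMonoid α) (h : RWReduces T u v) :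
    RWReduces T (x * u * y) (x * v * y) :=
  h.lift (fun w => x * w * y) fun _ _ => RWStep.mul_mul x y

lemma RWReduces.mul {u u' v v' : FreeMonoid α} (hu : RWReduces T u u') (hv : RWReduces T v v') :
    RWReduces T (u * v) (u' * v') := by
  have h₁ := hu.mul_mul 1 v
  have h₂ := hv.mul_mul u' 1
  simp only [one_mul, mul_one] at h₁ h₂
  exact h₁.trans h₂

lemma RWConfluent.join_of_rwCon (hconf : RWConfluent T) {u v : FreeMonoid α}
    (h : RWCon T u v) : Relation.Join (RWReduces T) u v := by
  have hequiv : Equivalence (Relation.Join (RWReduces T)) :=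
    Relation.equivalence_join (r := Relation.ReflTransGen (RWStep T)) hconf
  induction h with
  | of u v hstep => exact ⟨v, .single hstep, .refl⟩
  | refl u => exact hequiv.refl u
  | symm _ ih => exact hequiv.symm ih
  | trans _ _ ih₁ ih₂ => exact hequiv.trans ih₁ ih₂
  | mul _ _ ih₁ ih₂ =>
    obtain ⟨z₁, hu₁, hv₁⟩ := ih₁
    obtain ⟨z₂, hu₂, hv₂⟩ := ih₂
    exact ⟨z₁ * z₂, hu₁.mul hu₂, hv₁.mul hv₂⟩

lemma RWIrreducible.eq_of_reduces {u v : FreeMonoid α} (hu : RWIrreducible T u)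
    (h : RWReduces T u v) : u = v := by
  rcases h.cases_head with rfl | ⟨w, hw, -⟩
  · rfl
  · exact absurd hw (hu w)

lemma RWIrreducible.eq_of_rwCon (hconf : RWConfluent T) {u v : FreeMonoid α}
    (hu : RWIrreducible T u) (hv : RWIrreducible T v) (h : RWCon T u v) : u = v := by
  obtain ⟨z, huz, hvz⟩ := hconf.join_of_rwCon h
  rw [hu.eq_of_reduces huz, hv.eq_of_reduces hvz]

lemma RWLengthReducing.length_lt (hlr : RWLengthReducing T) {u v : FreeMonoid α}
    (h : RWStep T u v) : v.length < u.length := by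
  obtain ⟨x, y, l, r, hmem, rfl, rfl⟩ := h
  have := hlr (l, r) hmem
  simp only [FreeMonoid.length_mul] at this ⊢
  omega

lemma RWLengthReducing.rwIrreducible_of_forall_length_le (hlr : RWLengthReducing T)
    {u : FreeMonoid α} (h : ∀ v, RWCon T u v → u.length ≤ v.length) : RWIrreducible T u :=
  fun v hstep => (hlr.length_lt hstep).not_ge (h v (ConGen.Rel.of u v hstep))

end Rewriting

section Geodetic

variable {V : Type*} {Γ : SimpleGraph V}

lemma isGeodetic_of_forall_length_eq_dist (hconn : Γ.Preconnected)
    (h : ∀ u v (p q : Γ.Walk u v), p.length = Γ.dist u v → q.length = Γ.dist u v → p = q) :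
    IsGeodetic Γ := by
  intro u v
  obtain ⟨p, hp⟩ := (hconn u v).exists_walk_length_eq_dist
  refine ⟨p, fun q => hp ▸ dist_le q, fun q hq => h u v q p ?_ hp⟩
  exact le_antisymm (hp ▸ hq p) (dist_le q)

end Geodetic

namespace CayleyGraph

variable {A G : Type*} [Group G] (f : A → G)

lemma adj_iff {S : Set G} {g h : G} :
    (CayleyGraph G S).Adj g h ↔ g ≠ h ∧ g⁻¹ * h ∈ S ∪ S⁻¹ := Iff.rfl

lemma exists_walk_length_le (w : List A) (g : G) :
    ∃ p : (CayleyGraph G (Set.range f)).Walk g (g * (w.map f).prod), p.length ≤ w.length := by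
  induction w generalizing g with
  | nil => exact ⟨Walk.nil.copy rfl (by simp), by simp⟩
  | cons a w ih =>
    obtain ⟨p, hp⟩ := ih (g * f a)
    have hend : g * f a * (w.map f).prod = g * ((a :: w).map f).prod := by
      simp only [List.map_cons, List.prod_cons, mul_assoc]
    by_cases hloop : g = g * f a
    · exact ⟨p.copy hloop.symm hend, by simp only [Walk.length_copy, List.length_cons]; omega⟩
    · have hadj : (CayleyGraph G (Set.range f)).Adj g (g * f a) :=
        adj_iff.2 ⟨hloop, Or.inl ⟨a, by group⟩⟩
      exact ⟨(Walk.cons hadj p).copy rfl hend, by simpa using hp⟩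

lemma exists_word_of_walk (hS : (Set.range f)⁻¹ ⊆ Set.range f) {g h : G}
    (p : (CayleyGraph G (Set.range f)).Walk g h) :
    ∃ w : List A, w.length = p.length ∧ g * (w.map f).prod = h ∧
      p.support = List.scanl (· * ·) g (w.map f) := by
  induction p with
  | nil => exact ⟨[], by simp⟩
  | @cons g k h hadj p ih =>
    obtain ⟨w, hlen, hprod, hsupp⟩ := ih
    obtain ⟨a, ha⟩ : g⁻¹ * k ∈ Set.range f := by
      rcases (adj_iff.1 hadj).2 with hmem | hmem
      · exact hmem
      · exact hS hmem
    have hk : g * f a = k := by rw [ha]; group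
    refine ⟨a :: w, by simp [hlen], ?_, ?_⟩
    · simp only [List.map_cons, List.prod_cons, ← mul_assoc, hk, hprod]
    · simp only [Walk.support_cons, List.map_cons, List.scanl_cons, hk, hsupp]

lemma preconnected (hgen : ∀ x : G, ∃ w : List A, (w.map f).prod = x) :
    (CayleyGraph G (Set.range f)).Preconnected := by
  intro g h
  obtain ⟨w, hw⟩ := hgen (g⁻¹ * h)
  obtain ⟨p, -⟩ := exists_walk_length_le f w g
  exact ⟨p.copy rfl (by rw [hw]; group)⟩

lemma exists_word_of_length_eq_dist (hS : (Set.range f)⁻¹ ⊆ Set.range f) {g h : G}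
    (p : (CayleyGraph G (Set.range f)).Walk g h)
    (hp : p.length = (CayleyGraph G (Set.range f)).dist g h) :
    ∃ w : List A, g * (w.map f).prod = h ∧ p.support = List.scanl (· * ·) g (w.map f) ∧
      ∀ w' : List A, g * (w'.map f).prod = h → w.length ≤ w'.length := by
  obtain ⟨w, hlen, hprod, hsupp⟩ := exists_word_of_walk f hS p
  refine ⟨w, hprod, hsupp, fun w' hw' => ?_⟩
  obtain ⟨q, hq⟩ := exists_walk_length_le f w' g
  have := dist_le (q.copy rfl hw')
  simp only [Walk.length_copy] at this
  omega

end CayleyGraph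

section Presentation

variable {α M : Type*} [Monoid M] {T : Set (FreeMonoid α × FreeMonoid α)}
  (e : RWMonoid T ≃* M)

lemma RWMonoid.mulEquiv_rwClass (w : FreeMonoid α) :
    e (RWclass T w) = FreeMonoid.lift (fun a => e (RWclass T (FreeMonoid.of a))) w :=
  DFunLike.congr_fun (FreeMonoid.hom_eq (f := e.toMonoidHom.comp (Con.mk' (RWCon T)))
    (g := FreeMonoid.lift _) fun _ => rfl) w

lemma RWMonoid.rwCon_iff_lift_eq {u v : FreeMonoid α} :
    RWCon T u v ↔ FreeMonoid.lift (fun a => e (RWclass T (FreeMonoid.of a))) u =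
      FreeMonoid.lift (fun a => e (RWclass T (FreeMonoid.of a))) v := by
  rw [← mulEquiv_rwClass, ← mulEquiv_rwClass, e.apply_eq_iff_eq]
  exact (Con.eq (RWCon T)).symm

end Presentation

theorem stmt16_general {A : Type} (T : Set (FreeMonoid A × FreeMonoid A))
    (hconf : RWConfluent T)
    (hlr : RWLengthReducing T) (G : Type*) [Group G] (e : RWMonoid T ≃* G)
    (hinv : ∀ a : A, ∃ b : A,
      e (RWclass T (FreeMonoid.of b)) = (e (RWclass T (FreeMonoid.of a)))⁻¹) :
    IsGeodetic (CayleyGraph G (Set.range fun a : A => e (RWclass T (FreeMonoid.of a)))) := by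
  set f : A → G := fun a => e (RWclass T (FreeMonoid.of a))
  have hS : (Set.range f)⁻¹ ⊆ Set.range f := by
    rintro _ ⟨a, ha⟩
    obtain ⟨b, hb⟩ : ∃ b, f b = (f a)⁻¹ := hinv a
    exact ⟨b, by rw [hb, ha, inv_inv]⟩
  have hgen : ∀ x : G, ∃ w : List A, (w.map f).prod = x := fun x => by
    obtain ⟨w, hw⟩ := Con.mk'_surjective (c := RWCon T) (e.symm x)
    refine ⟨w.toList, ?_⟩
    rw [← FreeMonoid.lift_apply, ← RWMonoid.mulEquiv_rwClass, RWclass, hw, e.apply_symm_apply]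
  have hirr : ∀ w : List A, (∀ w' : List A, (w'.map f).prod = (w.map f).prod →
      w.length ≤ w'.length) → RWIrreducible T (FreeMonoid.ofList w) := fun w hmin =>
    hlr.rwIrreducible_of_forall_length_le fun w' hw' => hmin w'.toList <| by
      rw [← FreeMonoid.lift_apply, ← FreeMonoid.lift_ofList]
      exact ((RWMonoid.rwCon_iff_lift_eq e).1 hw').symm
  refine isGeodetic_of_forall_length_eq_dist (CayleyGraph.preconnected f hgen)
    fun u v p q hp hq => ?_
  obtain ⟨wp, hwp, hsp, hminp⟩ := CayleyGraph.exists_word_of_length_eq_dist f hS p hp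
  obtain ⟨wq, hwq, hsq, hminq⟩ := CayleyGraph.exists_word_of_length_eq_dist f hS q hq
  have hprod : (wp.map f).prod = (wq.map f).prod := mul_left_cancel (hwp.trans hwq.symm)
  have hword : wp = wq := FreeMonoid.ofList.injective <| RWIrreducible.eq_of_rwCon hconf
    (hirr wp fun w' hw' => hminp w' (by rw [hw', hwp]))
    (hirr wq fun w' hw' => hminq w' (by rw [hw', hwq]))
    ((RWMonoid.rwCon_iff_lift_eq e).2 (by simpa only [FreeMonoid.lift_ofList] using hprod))
  exact Walk.ext_support (by rw [hsp, hsq, hword])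

theorem stmt16 {A : Type} [Fintype A] (T : Set (FreeMonoid A × FreeMonoid A))
    (hT : T.Finite) (hterm : RWTerminating T) (hconf : RWConfluent T)
    (hlr : RWLengthReducing T) (G : Type*) [Group G] (e : RWMonoid T ≃* G)
    (hinv : ∀ a : A, ∃ b : A,
      e (RWclass T (FreeMonoid.of b)) = (e (RWclass T (FreeMonoid.of a)))⁻¹) :
    IsGeodetic (CayleyGraph G (Set.range fun a : A => e (RWclass T (FreeMonoid.of a)))) :=
  stmt16_general T hconf hlr G e hinv
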